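/- arXiv:1905.06859 — 3 statements merged into one kernel-verified Lean document; each statement's English description precedes it below -/
import Mathlib

section
/- Let G be a finite group with a projective unitary representation ρ : G → U(d), and let π : G* → G be a Schur covering. Then there exist a group homomorphism ρ* : G* →* U(d) and unimodular scalars ω : G* → ℂ with ‖ω(x*)‖ = 1 such that ρ*(x*) = ω(x*) • ρ(π(x*)) for every x* ∈ G*. -/
noncomputable section

/-- The group of `ℂˣ`-valued 2-cocycles on `G` (trivial action). -/
def twoCocycles (G : Type*) [Group G] : Subgroup (G × G → ℂˣ) where
  carrier := {f | ∀ x y z : G, f (x, y) * f (x * y, z) = f (y, z) * f (x, y * z)}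
  one_mem' := by intro x y z; simp
  mul_mem' := by
    intro a b ha hb x y z
    simp only [Pi.mul_apply]
    rw [mul_mul_mul_comm, ha x y z, hb x y z, mul_mul_mul_comm]
  inv_mem' := by
    intro a ha x y z
    simp only [Pi.inv_apply]
    rw [← mul_inv, ha x y z, mul_inv]

/-- The group of `ℂˣ`-valued 2-coboundaries on `G`. -/
def twoCoboundaries (G : Type*) [Group G] : Subgroup (G × G → ℂˣ) where
  carrier := {f | ∃ t : G → ℂˣ, ∀ x y : G, f (x, y) = t x * t y * (t (x * y))⁻¹}
  one_mem' := ⟨1, by intro x y; simp⟩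
  mul_mem' := by
    rintro a b ⟨s, hs⟩ ⟨t, ht⟩
    refine ⟨s * t, fun x y => ?_⟩
    simp only [Pi.mul_apply]
    rw [hs x y, ht x y, mul_inv]
    ac_rfl
  inv_mem' := by
    rintro a ⟨t, ht⟩
    refine ⟨t⁻¹, fun x y => ?_⟩
    simp only [Pi.inv_apply]
    rw [ht x y]
    simp only [mul_inv, inv_inv]

/-- The Schur multiplier `M(G) = H²(G, ℂˣ)`: 2-cocycles modulo 2-coboundaries. -/
def schurMultiplier (G : Type*) [Group G] : Type _ :=
  ↥(twoCocycles G) ⧸ (twoCoboundaries G).subgroupOf (twoCocycles G)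

/-- `π : G* → G` is a Schur covering: surjective, with kernel contained in the center
and in the commutator subgroup of `G*`, and of cardinality that of the Schur multiplier. -/
def IsSchurCovering {Gst G : Type*} [Group Gst] [Group G] (π : Gst →* G) : Prop :=
  Function.Surjective π ∧
  π.ker ≤ Subgroup.center Gst ∧
  π.ker ≤ commutator Gst ∧
  Nat.card π.ker = Nat.card (schurMultiplier G)

instance (G : Type*) [Group G] : Group (schurMultiplier G) :=
  inferInstanceAs (Group (↥(twoCocycles G) ⧸ (twoCoboundaries G).subgroupOf (twoCocycles G)))

theorem mem_twoCocycles {G : Type*} [Group G] (f : G × G → ℂˣ) :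
    f ∈ twoCocycles G ↔ ∀ x y z : G, f (x, y) * f (x * y, z) = f (y, z) * f (x, y * z) :=
  Iff.rfl

theorem mem_twoCoboundaries {G : Type*} [Group G] (f : G × G → ℂˣ) :
    f ∈ twoCoboundaries G ↔ ∃ t : G → ℂˣ, ∀ x y : G, f (x, y) = t x * t y * (t (x * y))⁻¹ :=
  Iff.rfl

section Aux

variable {Gst G : Type*} [Group Gst] [Group G]

theorem mem_ker_aux (π : Gst →* G) (s : G → Gst) (hs : ∀ g, π (s g) = g) (x : Gst) :
    x * (s (π x))⁻¹ ∈ π.ker := by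
  rw [MonoidHom.mem_ker, map_mul, map_inv, hs, mul_inv_cancel]

theorem mem_ker_c (π : Gst →* G) (s : G → Gst) (hs : ∀ g, π (s g) = g) (g h : G) :
    s g * s h * (s (g * h))⁻¹ ∈ π.ker := by
  rw [MonoidHom.mem_ker, map_mul, map_mul, map_inv, hs, hs, hs, mul_inv_cancel]

theorem cocycle_split (π : Gst →* G) (hcen : π.ker ≤ Subgroup.center Gst)
    (s : G → Gst) (hs : ∀ g, π (s g) = g) (x y : Gst) :
    x * y * (s (π (x * y)))⁻¹
      = (x * (s (π x))⁻¹) * (y * (s (π y))⁻¹) * (s (π x) * s (π y) * (s (π x * π y))⁻¹) := by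
  have hc := Subgroup.mem_center_iff.mp (hcen (mem_ker_aux π s hs y))
  rw [map_mul]
  calc x * y * (s (π x * π y))⁻¹
      = x * (s (π x))⁻¹ * (s (π x) * (y * (s (π y))⁻¹)) * (s (π y) * (s (π x * π y))⁻¹) := by
        group
    _ = (x * (s (π x))⁻¹) * (y * (s (π y))⁻¹) * (s (π x) * s (π y) * (s (π x * π y))⁻¹) := by
        rw [hc (s (π x))]; group

end Aux

theorem transgression {G Gst : Type*} [Group G] [Finite G] [Group Gst] [Finite Gst]
    (π : Gst →* G) (hsurj : Function.Surjective π) (hcen : π.ker ≤ Subgroup.center Gst)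
    (hcom : π.ker ≤ commutator Gst) (hcard : Nat.card π.ker = Nat.card (schurMultiplier G))
    (F : ↥(twoCocycles G)) :
    ∃ (s : G → Gst) (χ : ↥π.ker →* ℂˣ) (t : G → ℂˣ),
      (∀ g, π (s g) = g) ∧ s 1 = 1 ∧
      ∀ (g h : G) (hm : s g * s h * (s (g * h))⁻¹ ∈ π.ker),
        (F : G × G → ℂˣ) (g, h) = χ ⟨s g * s h * (s (g * h))⁻¹, hm⟩
          * (t g * t h * (t (g * h))⁻¹) := by
  classical
  -- the section
  set s : G → Gst := fun g => if g = 1 then 1 else Function.surjInv hsurj g with hsdef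
  have hs : ∀ g, π (s g) = g := by
    intro g
    by_cases hg : g = 1
    · simp [hsdef, hg]
    · simp [hsdef, hg, Function.surjInv_eq hsurj]
  have hs1 : s 1 = 1 := by simp [hsdef]
  -- the kernel-valued 2-cocycle of the extension
  set c : G → G → ↥π.ker := fun g h => ⟨s g * s h * (s (g * h))⁻¹, mem_ker_c π s hs g h⟩
    with hcdef
  have hcocy : ∀ g h k : G, (c g h : Gst) * (c (g * h) k : Gst)
      = (c h k : Gst) * (c g (h * k) : Gst) := by
    intro g h k
    show (s g * s h * (s (g * h))⁻¹) * (s (g * h) * s k * (s (g * h * k))⁻¹)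
        = (s h * s k * (s (h * k))⁻¹) * (s g * s (h * k) * (s (g * (h * k)))⁻¹)
    have hz := Subgroup.mem_center_iff.mp (hcen (mem_ker_c π s hs h k))
    calc (s g * s h * (s (g * h))⁻¹) * (s (g * h) * s k * (s (g * h * k))⁻¹)
        = s g * s h * s k * (s (g * h * k))⁻¹ := by group
      _ = s g * (s h * s k * (s (h * k))⁻¹) * (s (h * k) * (s (g * (h * k)))⁻¹) := by
          rw [mul_assoc g h k]; group
      _ = (s h * s k * (s (h * k))⁻¹) * (s g * s (h * k) * (s (g * (h * k)))⁻¹) := by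
          rw [hz (s g)]; group
  -- the transgression homomorphism
  letI : CommGroup ↥π.ker :=
    { (inferInstance : Group ↥π.ker) with
      mul_comm := fun a b =>
        Subtype.ext (by exact (Subgroup.mem_center_iff.mp (hcen a.2) ↑b).symm) }
  set cF : (↥π.ker →* ℂˣ) → ↥(twoCocycles G) := fun χ =>
    ⟨fun p => χ (c p.1 p.2), by
      intro x y z
      simp only [← map_mul]
      exact congrArg χ (Subtype.ext (hcocy x y z))⟩ with hcFdef
  have hcFmul : ∀ a b, cF (a * b) = cF a * cF b :=
    fun a b => Subtype.ext (funext fun p => rfl)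
  set tra : (↥π.ker →* ℂˣ) →* schurMultiplier G :=
    MonoidHom.mk' (fun χ => QuotientGroup.mk (cF χ)) (by
      intro a b
      show (QuotientGroup.mk (cF (a * b)) : schurMultiplier G)
          = QuotientGroup.mk (cF a) * QuotientGroup.mk (cF b)
      rw [hcFmul]
      rfl) with htradef
  have htra_apply : ∀ χ, tra χ = QuotientGroup.mk (cF χ) := fun _ => rfl
  -- injectivity of the transgression
  have hinj : Function.Injective tra := by
    rw [injective_iff_map_eq_one]
    intro χ hχ
    rw [htra_apply] at hχ
    change (QuotientGroup.mk (cF χ) : ↥(twoCocycles G) ⧸ (twoCoboundaries G).subgroupOf (twoCocycles G)) = 1 at hχ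
    rw [QuotientGroup.eq_one_iff, Subgroup.mem_subgroupOf] at hχ
    obtain ⟨t, ht⟩ := (mem_twoCoboundaries _).mp hχ
    have htc : ∀ g h : G, χ (c g h) = t g * t h * (t (g * h))⁻¹ := fun g h => ht g h
    -- build a homomorphism Gst →* ℂˣ
    have hφmul : ∀ x y : Gst,
        (χ ⟨x * y * (s (π (x * y)))⁻¹, mem_ker_aux π s hs (x * y)⟩ * t (π (x * y)))
          = (χ ⟨x * (s (π x))⁻¹, mem_ker_aux π s hs x⟩ * t (π x))
            * (χ ⟨y * (s (π y))⁻¹, mem_ker_aux π s hs y⟩ * t (π y)) := by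
      intro x y
      have hsplit : (⟨x * y * (s (π (x * y)))⁻¹, mem_ker_aux π s hs (x * y)⟩ : ↥π.ker)
          = ⟨x * (s (π x))⁻¹, mem_ker_aux π s hs x⟩
            * ⟨y * (s (π y))⁻¹, mem_ker_aux π s hs y⟩ * c (π x) (π y) :=
        Subtype.ext (cocycle_split π hcen s hs x y)
      rw [hsplit, map_mul, map_mul, htc (π x) (π y), map_mul π x y]
      refine Units.ext ?_
      push_cast
      field_simp
    set φ : Gst →* ℂˣ :=
      MonoidHom.mk' (fun x => χ ⟨x * (s (π x))⁻¹, mem_ker_aux π s hs x⟩ * t (π x)) hφmul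
      with hφdef
    have hker : commutator Gst ≤ φ.ker := by
      rw [commutator_def, Subgroup.commutator_le]
      intro a _ b _
      rw [MonoidHom.mem_ker, map_commutatorElement]
      exact commutatorElement_eq_one_iff_mul_comm.mpr (mul_comm _ _)
    have hφk : ∀ a : ↥π.ker, χ a * t 1 = 1 := by
      intro a
      have h1 := hker (hcom a.2)
      rw [MonoidHom.mem_ker] at h1
      have ha1 : π (a : Gst) = 1 := a.2
      have ha2 : (⟨(a : Gst) * (s (π (a : Gst)))⁻¹, mem_ker_aux π s hs _⟩ : ↥π.ker) = a :=
        Subtype.ext (by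
          show (a : Gst) * (s (π (a : Gst)))⁻¹ = (a : Gst)
          rw [ha1, hs1, inv_one, mul_one])
      have h2 : φ (a : Gst)
          = χ ⟨(a : Gst) * (s (π (a : Gst)))⁻¹, mem_ker_aux π s hs _⟩ * t (π (a : Gst)) := rfl
      rw [h2, ha2, ha1] at h1
      exact h1
    have ht1 : t 1 = 1 := by
      have := hφk 1
      rwa [map_one, one_mul] at this
    ext a
    have := hφk a
    rw [ht1, mul_one] at this
    rw [this, MonoidHom.one_apply]
  -- cardinality count
  haveI : Finite (schurMultiplier G) := by
    refine (Nat.card_ne_zero.mp ?_).2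
    rw [← hcard]
    exact Nat.card_pos.ne'
  haveI : NeZero ((Monoid.exponent ↥π.ker : ℂ)) :=
    ⟨by exact_mod_cast Monoid.exponent_ne_zero_of_finite⟩
  have hcard2 : Nat.card (↥π.ker →* ℂˣ) = Nat.card (schurMultiplier G) := by
    obtain ⟨e⟩ := CommGroup.monoidHom_mulEquiv_of_hasEnoughRootsOfUnity ↥π.ker ℂ
    rw [Nat.card_congr e.toEquiv, hcard]
  have hbij : Function.Bijective tra :=
    (Nat.bijective_iff_injective_and_card tra).mpr ⟨hinj, hcard2⟩
  obtain ⟨χ, hχ⟩ := hbij.2 (QuotientGroup.mk F)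
  rw [htra_apply] at hχ
  change (QuotientGroup.mk (cF χ) : ↥(twoCocycles G) ⧸ (twoCoboundaries G).subgroupOf (twoCocycles G)) = QuotientGroup.mk F at hχ
  rw [QuotientGroup.eq, Subgroup.mem_subgroupOf] at hχ
  obtain ⟨t, ht⟩ := (mem_twoCoboundaries _).mp hχ
  refine ⟨s, χ, t, hs, hs1, fun g h hm => ?_⟩
  have h3 := ht g h
  have h4 : ((cF χ : G × G → ℂˣ) (g, h))⁻¹ * (F : G × G → ℂˣ) (g, h)
      = t g * t h * (t (g * h))⁻¹ := by
    rw [← h3]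
    simp
  have h5 : (cF χ : G × G → ℂˣ) (g, h) = χ (c g h) := rfl
  have h6 : (⟨s g * s h * (s (g * h))⁻¹, hm⟩ : ↥π.ker) = c g h := Subtype.ext rfl
  rw [h6, ← h5]
  rw [inv_mul_eq_iff_eq_mul] at h4
  exact h4

theorem smul_unitary_cancel {d : ℕ} (hd : d ≠ 0) (M : Matrix.unitaryGroup (Fin d) ℂ)
    {a b : ℂ} (h : a • (M : Matrix (Fin d) (Fin d) ℂ) = b • (M : Matrix (Fin d) (Fin d) ℂ)) :
    a = b := by
  have h2 : a • ((M : Matrix (Fin d) (Fin d) ℂ) * star (M : Matrix (Fin d) (Fin d) ℂ))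
      = b • ((M : Matrix (Fin d) (Fin d) ℂ) * star (M : Matrix (Fin d) (Fin d) ℂ)) := by
    rw [← smul_mul_assoc, ← smul_mul_assoc, h]
  rw [Unitary.mul_star_self_of_mem M.2] at h2
  have i0 : Fin d := ⟨0, Nat.pos_of_ne_zero hd⟩
  have h3 := congrFun (congrFun h2 i0) i0
  simpa [Matrix.one_apply] using h3

theorem smul_mem_unitary {d : ℕ} {ω : ℂ} (hω : ‖ω‖ = 1) (M : Matrix.unitaryGroup (Fin d) ℂ) :
    ω • (M : Matrix (Fin d) (Fin d) ℂ) ∈ Matrix.unitaryGroup (Fin d) ℂ := by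
  rw [Matrix.mem_unitaryGroup_iff, star_smul, smul_mul_assoc, mul_smul_comm, smul_smul]
  rw [Unitary.mul_star_self_of_mem M.2]
  have : ω * star ω = 1 := by
    rw [RCLike.star_def, Complex.mul_conj]
    norm_cast
    rw [Complex.normSq_eq_norm_sq, hω, one_pow]
  rw [this, one_smul]

/-- A projective unitary representation of a finite group lifts to an honest unitary
representation of any Schur cover, up to unimodular scalars. -/
theorem stmt15 {G Gst : Type*} [Group G] [Finite G] [Group Gst] [Finite Gst]
    {d : ℕ} (ρ : G → Matrix.unitaryGroup (Fin d) ℂ)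
    (hρ1 : ρ 1 = 1)
    (hproj : ∃ f : G × G → ℂ, ∀ x y : G, ‖f (x, y)‖ = 1 ∧
      (ρ x : Matrix (Fin d) (Fin d) ℂ) * (ρ y : Matrix (Fin d) (Fin d) ℂ)
        = f (x, y) • (ρ (x * y) : Matrix (Fin d) (Fin d) ℂ))
    (π : Gst →* G) (hπ : IsSchurCovering π) :
    ∃ (ρs : Gst →* Matrix.unitaryGroup (Fin d) ℂ) (ω : Gst → ℂ),
      (∀ xs, ‖ω xs‖ = 1) ∧
      ∀ xs, (ρs xs : Matrix (Fin d) (Fin d) ℂ)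
        = ω xs • (ρ (π xs) : Matrix (Fin d) (Fin d) ℂ) := by
  obtain ⟨hsurj, hcen, hcom, hcard⟩ := hπ
  rcases eq_or_ne d 0 with hd | hd
  · subst hd
    refine ⟨1, fun _ => 1, fun _ => norm_one, fun xs => ?_⟩
    have : Subsingleton (Matrix (Fin 0) (Fin 0) ℂ) := ⟨fun a b => by ext i; exact i.elim0⟩
    exact Subsingleton.elim _ _
  · obtain ⟨f, hf⟩ := hproj
    have hne : ∀ p : G × G, f p ≠ 0 := by
      rintro ⟨x, y⟩ h
      have := (hf x y).1
      rw [h, norm_zero] at this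
      exact zero_ne_one this
    -- the cocycle of units
    set F0 : G × G → ℂˣ := fun p => Units.mk0 (f p) (hne p) with hF0def
    have hFc : ∀ x y z : G, f (x, y) * f (x * y, z) = f (y, z) * f (x, y * z) := by
      intro x y z
      apply smul_unitary_cancel hd (ρ (x * y * z))
      calc (f (x, y) * f (x * y, z)) • (ρ (x * y * z) : Matrix (Fin d) (Fin d) ℂ)
          = f (x, y) • (f (x * y, z) • (ρ (x * y * z) : Matrix (Fin d) (Fin d) ℂ)) :=
            mul_smul _ _ _
        _ = f (x, y) • ((ρ (x * y) : Matrix (Fin d) (Fin d) ℂ) * ρ z) := by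
            rw [(hf (x * y) z).2]
        _ = (f (x, y) • (ρ (x * y) : Matrix (Fin d) (Fin d) ℂ)) * ρ z := by
            rw [smul_mul_assoc]
        _ = ((ρ x : Matrix (Fin d) (Fin d) ℂ) * ρ y) * ρ z := by rw [(hf x y).2]
        _ = (ρ x : Matrix (Fin d) (Fin d) ℂ) * ((ρ y : Matrix (Fin d) (Fin d) ℂ) * ρ z) :=
            mul_assoc _ _ _
        _ = (ρ x : Matrix (Fin d) (Fin d) ℂ) * (f (y, z) • (ρ (y * z) : Matrix (Fin d) (Fin d) ℂ)) := by
            rw [(hf y z).2]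
        _ = f (y, z) • ((ρ x : Matrix (Fin d) (Fin d) ℂ) * ρ (y * z)) := by
            rw [mul_smul_comm]
        _ = f (y, z) • (f (x, y * z) • (ρ (x * (y * z)) : Matrix (Fin d) (Fin d) ℂ)) := by
            rw [(hf x (y * z)).2]
        _ = (f (y, z) * f (x, y * z)) • (ρ (x * y * z) : Matrix (Fin d) (Fin d) ℂ) := by
            rw [← mul_smul, mul_assoc x y z]
    have hFmem : F0 ∈ twoCocycles G := by
      intro x y z
      refine Units.ext ?_
      push_cast [hF0def]
      exact hFc x y z
    obtain ⟨s, χ, t, hs, hs1, hF⟩ :=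
      transgression π hsurj hcen hcom hcard ⟨F0, hFmem⟩
    -- norms of values of χ
    have hχn : ∀ a : ↥π.ker, ‖((χ a : ℂˣ) : ℂ)‖ = 1 := by
      intro a
      have h1 : ((χ a : ℂˣ) : ℂ) ^ Nat.card ↥π.ker = 1 := by
        have : (χ a) ^ Nat.card ↥π.ker = 1 := by
          rw [← map_pow, pow_card_eq_one', map_one]
        calc ((χ a : ℂˣ) : ℂ) ^ Nat.card ↥π.ker = ((χ a ^ Nat.card ↥π.ker : ℂˣ) : ℂ) := by
              push_cast; ring
          _ = 1 := by rw [this]; rfl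
      exact Complex.norm_eq_one_of_pow_eq_one h1 Nat.card_pos.ne'
    -- the defining relation, in ℂ
    have hrel : ∀ g h : G, f (g, h)
        = ((χ ⟨s g * s h * (s (g * h))⁻¹, mem_ker_c π s hs g h⟩ : ℂˣ) : ℂ)
          * ((t g : ℂ) * (t h : ℂ) * ((t (g * h) : ℂ))⁻¹) := by
      intro g h
      have := congrArg (Units.val) (hF g h (mem_ker_c π s hs g h))
      push_cast at this
      exact this
    -- norms of values of t
    have htn : ∀ g : G, ‖(t g : ℂ)‖ = 1 := by
      have hmul : ∀ g h : G, ‖(t g : ℂ)‖ * ‖(t h : ℂ)‖ = ‖(t (g * h) : ℂ)‖ := by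
        intro g h
        have h1 := congrArg norm (hrel g h)
        rw [(hf g h).1, norm_mul, hχn, one_mul, norm_mul, norm_mul, norm_inv] at h1
        field_simp at h1
        linarith [h1]
      have h1 : ‖(t (1 : G) : ℂ)‖ = 1 := by
        have := hmul 1 1
        rw [one_mul] at this
        have h2 : ‖(t (1 : G) : ℂ)‖ ≠ 0 := by simpa using (Units.ne_zero (t 1))
        field_simp at this
        tauto
      have hpow : ∀ (n : ℕ) (g : G), ‖(t (g ^ n) : ℂ)‖ = ‖(t g : ℂ)‖ ^ n := by
        intro n
        induction n with
        | zero => intro g; simpa using h1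
        | succ n ih => intro g; rw [pow_succ, pow_succ, ← hmul, ih]
      intro g
      have h2 : ‖(t g : ℂ)‖ ^ Nat.card G = 1 := by
        rw [← hpow, pow_card_eq_one', h1]
      have h3 : (0:ℝ) ≤ ‖(t g : ℂ)‖ := norm_nonneg _
      rcases lt_trichotomy ‖(t g : ℂ)‖ 1 with h | h | h
      · have h4 := pow_lt_one₀ h3 h (Nat.card_pos (α := G)).ne'
        rw [h2] at h4
        exact absurd h4 (lt_irrefl 1)
      · exact h
      · have h4 := one_lt_pow₀ h (Nat.card_pos (α := G)).ne'
        rw [h2] at h4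
        exact absurd h4 (lt_irrefl 1)
    -- define the scalars and the lift
    set ω : Gst → ℂ := fun x =>
      ((χ ⟨x * (s (π x))⁻¹, mem_ker_aux π s hs x⟩ : ℂˣ) : ℂ) * ((t (π x) : ℂ))⁻¹ with hωdef
    have hωn : ∀ x, ‖ω x‖ = 1 := by
      intro x
      rw [hωdef]
      simp only [norm_mul, norm_inv, hχn, htn]
      norm_num
    set ρsf : Gst → Matrix.unitaryGroup (Fin d) ℂ := fun x =>
      ⟨ω x • (ρ (π x) : Matrix (Fin d) (Fin d) ℂ), smul_mem_unitary (hωn x) (ρ (π x))⟩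
      with hρsdef
    have hωmul : ∀ x y : Gst, ω (x * y) = ω x * ω y * f (π x, π y) := by
      intro x y
      have hsplit : (⟨x * y * (s (π (x * y)))⁻¹, mem_ker_aux π s hs (x * y)⟩ : ↥π.ker)
          = ⟨x * (s (π x))⁻¹, mem_ker_aux π s hs x⟩
            * ⟨y * (s (π y))⁻¹, mem_ker_aux π s hs y⟩
            * ⟨s (π x) * s (π y) * (s (π x * π y))⁻¹, mem_ker_c π s hs (π x) (π y)⟩ :=
        Subtype.ext (cocycle_split π hcen s hs x y)
      rw [hωdef]
      simp only
      rw [hsplit, map_mul, map_mul, map_mul π x y, hrel (π x) (π y)]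
      push_cast
      have h1 : ((t (π x) : ℂ)) ≠ 0 := Units.ne_zero _
      have h2 : ((t (π y) : ℂ)) ≠ 0 := Units.ne_zero _
      have h3 : ((t (π x * π y) : ℂ)) ≠ 0 := Units.ne_zero _
      field_simp
    have hρmul : ∀ x y : Gst, ρsf (x * y) = ρsf x * ρsf y := by
      intro x y
      refine Subtype.ext ?_
      show ω (x * y) • (ρ (π (x * y)) : Matrix (Fin d) (Fin d) ℂ)
          = (ω x • (ρ (π x) : Matrix (Fin d) (Fin d) ℂ))
            * (ω y • (ρ (π y) : Matrix (Fin d) (Fin d) ℂ))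
      rw [smul_mul_assoc, mul_smul_comm, smul_smul, (hf (π x) (π y)).2, smul_smul,
        map_mul π x y, hωmul]
    exact ⟨MonoidHom.mk' ρsf hρmul, ω, hωn, fun xs => rfl⟩
end
end

section
/- Let m ≥ 1, q = 2^(2m+1), t = 2^(m+1), and let F be a finite field with q elements. For a, b ∈ F let ξ(a,b) ∈ GL(4, F) be the lower triangular matrix with rows (1, 0, 0, 0), (a, 1, 0, 0), (b, a^t, 1, 0), (a^(t+2) + a·b + b^t, a^(t+1) + b, a, 1), and for e ∈ Fˣ let η(e) ∈ GL(4, F) be the diagonal matrix diag(e^(1+2^m), e^(2^m), e^(−2^m), e^(−1−2^m)). Let G₀ ≤ GL(4, F) be the subgroup generated by all ξ(a,b) (a, b ∈ F) and all η(e) (e ∈ Fˣ). Then every ξ(a,b) lies in the commutator subgroup of G₀. Consequently, every group homomorphism G₀ →* ℂˣ is trivial on all ξ(a,b). -/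
noncomputable section

/-- The unipotent lower triangular generator `ξ(a,b)` of the Suzuki point stabilizer,
where `t = 2^(m+1)`. -/
def xiMat {F : Type*} [Field F] (t : ℕ) (a b : F) : Matrix (Fin 4) (Fin 4) F :=
  !![1, 0, 0, 0;
     a, 1, 0, 0;
     b, a ^ t, 1, 0;
     a ^ (t + 2) + a * b + b ^ t, a ^ (t + 1) + b, a, 1]

theorem xiMat_det_ne_zero {F : Type*} [Field F] (t : ℕ) (a b : F) :
    (xiMat t a b).det ≠ 0 := by
  have htri : (xiMat t a b).BlockTriangular OrderDual.toDual := by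
    intro i j hij
    fin_cases i <;> fin_cases j <;>
      first
        | rfl
        | exact absurd hij (by decide)
  rw [Matrix.det_of_lowerTriangular _ htri, Fin.prod_univ_four]
  show (1 : F) * 1 * 1 * 1 ≠ 0
  norm_num

/-- `ξ(a,b)` as an element of `GL(4, F)`. -/
def xiGL {F : Type*} [Field F] (t : ℕ) (a b : F) : GL (Fin 4) F :=
  Matrix.GeneralLinearGroup.mkOfDetNeZero (xiMat t a b) (xiMat_det_ne_zero t a b)

/-- The diagonal generator `η(e) = diag(e^(1+2^m), e^(2^m), e^(−2^m), e^(−1−2^m))` of the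
Suzuki point stabilizer. -/
def etaMat {F : Type*} [Field F] (m : ℕ) (e : Fˣ) : Matrix (Fin 4) (Fin 4) F :=
  Matrix.diagonal ![((e ^ (1 + 2 ^ m) : Fˣ) : F), ((e ^ (2 ^ m) : Fˣ) : F),
    ((e⁻¹ ^ (2 ^ m) : Fˣ) : F), ((e⁻¹ ^ (1 + 2 ^ m) : Fˣ) : F)]

theorem etaMat_det_ne_zero {F : Type*} [Field F] (m : ℕ) (e : Fˣ) :
    (etaMat m e).det ≠ 0 := by
  rw [etaMat, Matrix.det_diagonal, Fin.prod_univ_four]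
  simp only [Matrix.cons_val_zero, Matrix.cons_val_one, Matrix.head_cons,
    Matrix.cons_val_two, Matrix.tail_cons, Matrix.cons_val_three]
  exact mul_ne_zero (mul_ne_zero (mul_ne_zero (Units.ne_zero _) (Units.ne_zero _))
    (Units.ne_zero _)) (Units.ne_zero _)

/-- `η(e)` as an element of `GL(4, F)`. -/
def etaGL {F : Type*} [Field F] (m : ℕ) (e : Fˣ) : GL (Fin 4) F :=
  Matrix.GeneralLinearGroup.mkOfDetNeZero (etaMat m e) (etaMat_det_ne_zero m e)

/-- The point stabilizer `G₀` of the Suzuki group: the subgroup of `GL(4, F)` generated by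
the `ξ(a,b)` and the `η(e)`. -/
def suzukiStab (F : Type*) [Field F] (m : ℕ) : Subgroup (GL (Fin 4) F) :=
  Subgroup.closure
    ((Set.range fun p : F × F => xiGL (2 ^ (m + 1)) p.1 p.2) ∪
      (Set.range fun e : Fˣ => etaGL m e))

/-! ### Auxiliary lemmas -/

theorem xiGL_coe {F : Type*} [Field F] (t : ℕ) (a b : F) :
    (xiGL t a b : Matrix (Fin 4) (Fin 4) F) = xiMat t a b := rfl

theorem xiMat_mul {F : Type*} [Field F] [CharP F 2] {t : ℕ}
    (hfr : ∀ x y : F, (x + y) ^ t = x ^ t + y ^ t)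
    (hT : ∀ x : F, (x ^ t) ^ t = x ^ 2) (a b c d : F) :
    xiMat t a b * xiMat t c d = xiMat t (a + c) (b + d + a ^ t * c) := by
  have h2 : (2 : F) = 0 := CharTwo.two_eq_zero
  have h3 : (3 : F) = 1 := by linear_combination h2
  have e1 : (a + c) ^ t = a ^ t + c ^ t := hfr a c
  have e2 : (b + d + a ^ t * c) ^ t = b ^ t + d ^ t + a ^ 2 * c ^ t := by
    rw [hfr, hfr, mul_pow, hT]
  have e3 : (a + c) ^ (t + 1) = (a ^ t + c ^ t) * (a + c) := by rw [pow_succ, e1]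
  have e4 : (a + c) ^ (t + 2) = (a ^ t + c ^ t) * (a + c) ^ 2 := by rw [pow_add, e1]
  ext i j
  fin_cases i <;> fin_cases j <;>
      simp [xiMat, Matrix.mul_apply, Fin.sum_univ_four, e1, e2, e3, e4] <;>
    (try ring_nf) <;>
      (try simp only [h2, h3, zero_mul, mul_zero, add_zero, zero_add, mul_one, one_mul]) <;>
    (try ring)

theorem xiGL_mul {F : Type*} [Field F] [CharP F 2] {t : ℕ}
    (hfr : ∀ x y : F, (x + y) ^ t = x ^ t + y ^ t)
    (hT : ∀ x : F, (x ^ t) ^ t = x ^ 2) (a b c d : F) :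
    xiGL t a b * xiGL t c d = xiGL t (a + c) (b + d + a ^ t * c) :=
  Units.ext (xiMat_mul hfr hT a b c d)

theorem xiGL_zero_zero {F : Type*} [Field F] {t : ℕ} (ht : t ≠ 0) :
    xiGL t (0 : F) 0 = 1 := by
  apply Units.ext
  show xiMat t (0 : F) 0 = 1
  ext i j
  fin_cases i <;> fin_cases j <;>
    simp [xiMat, Matrix.one_apply, Matrix.vecHead, Matrix.vecTail, zero_pow ht,
      zero_pow (by omega : t + 2 ≠ 0), zero_pow (by omega : t + 1 ≠ 0)]

theorem xiGL_inv {F : Type*} [Field F] [CharP F 2] {t : ℕ} (ht : t ≠ 0)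
    (hfr : ∀ x y : F, (x + y) ^ t = x ^ t + y ^ t)
    (hT : ∀ x : F, (x ^ t) ^ t = x ^ 2) (a b : F) :
    (xiGL t a b)⁻¹ = xiGL t a (b + a ^ (t + 1)) := by
  symm
  apply eq_inv_of_mul_eq_one_right
  rw [xiGL_mul hfr hT]
  have h1 : a + a = 0 := CharTwo.add_self_eq_zero a
  have h2 : b + (b + a ^ (t + 1)) + a ^ t * a = 0 := by
    rw [← pow_succ]
    linear_combination CharTwo.add_self_eq_zero b + CharTwo.add_self_eq_zero (a ^ (t + 1))
  rw [h1, h2]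
  exact xiGL_zero_zero ht

theorem etaMat_mul_xiMat {F : Type*} [Field F] {m : ℕ}
    (hT : ∀ x : F, (x ^ 2 ^ (m + 1)) ^ 2 ^ (m + 1) = x ^ 2) (e : Fˣ) (a b : F) :
    etaMat m e * xiMat (2 ^ (m + 1)) a b
      = xiMat (2 ^ (m + 1)) ((↑e⁻¹ : F) * a) ((↑(e⁻¹ ^ (2 ^ (m + 1) + 1)) : F) * b)
          * etaMat m e := by
  set u : F := (e : F) with hu_def
  have hu : u ≠ 0 := e.ne_zero
  have h5 : (u ^ (2 ^ (m + 1) + 1)) ^ 2 ^ (m + 1) = u ^ 2 * u ^ 2 ^ (m + 1) := by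
    rw [pow_succ, mul_pow, hT]
  have hK : (2 : ℕ) ^ (m + 1) = 2 ^ m * 2 := pow_succ 2 m
  have h6 : (e : F) ^ (2 ^ (m * 2) * 4) = (e : F) ^ 2 := by
    rw [← hT, ← pow_mul]; congr 1; ring
  simp only [Units.val_inv_eq_inv_val, Units.val_pow_eq_pow_val]
  ext i j
  fin_cases i <;> fin_cases j <;>
      simp [etaMat, xiMat, Matrix.mul_apply, Fin.sum_univ_four, mul_pow, inv_pow, h5,
        Units.val_inv_eq_inv_val, Units.val_pow_eq_pow_val] <;>
    (try rw [hK]) <;> (try field_simp) <;> (try ring) <;> (try tauto) <;>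
    (try rw [h6]) <;> (try ring)

theorem etaGL_mul_xiGL {F : Type*} [Field F] {m : ℕ}
    (hT : ∀ x : F, (x ^ 2 ^ (m + 1)) ^ 2 ^ (m + 1) = x ^ 2) (e : Fˣ) (a b : F) :
    etaGL m e * xiGL (2 ^ (m + 1)) a b
      = xiGL (2 ^ (m + 1)) ((↑e⁻¹ : F) * a) ((↑(e⁻¹ ^ (2 ^ (m + 1) + 1)) : F) * b)
          * etaGL m e :=
  Units.ext (etaMat_mul_xiMat hT e a b)

/-- Every `ξ(a,b)` lies in the commutator subgroup of the Suzuki point stabilizer;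
consequently every linear character of the stabilizer is trivial on the `ξ(a,b)`. -/
theorem stmt17 (m : ℕ) (hm : 1 ≤ m) {F : Type*} [Field F] [Fintype F]
    (hF : Fintype.card F = 2 ^ (2 * m + 1)) (a b : F) :
    xiGL (2 ^ (m + 1)) a b ∈ ⁅suzukiStab F m, suzukiStab F m⁆ ∧
    ∀ φ : ↥(suzukiStab F m) →* ℂˣ, ∀ h : xiGL (2 ^ (m + 1)) a b ∈ suzukiStab F m,
      φ ⟨xiGL (2 ^ (m + 1)) a b, h⟩ = 1 := by
  -- characteristic 2
  haveI hp2 : CharP F 2 := by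
    have hchar : CharP F (ringChar F) := ringChar.charP F
    have hprime : (ringChar F).Prime := CharP.char_is_prime F (ringChar F)
    obtain ⟨n, -, hcard⟩ := FiniteField.card F (ringChar F)
    have hdvd : ringChar F ∣ 2 ^ (2 * m + 1) := by
      rw [← hF, hcard]
      exact dvd_pow_self _ n.ne_zero
    have : ringChar F = 2 :=
      (Nat.prime_dvd_prime_iff_eq hprime Nat.prime_two).mp
        (hprime.dvd_of_dvd_pow hdvd)
    rwa [this] at hchar
  set T : ℕ := 2 ^ (m + 1) with hT_def
  have hTne : T ≠ 0 := by positivity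
  have hq : ∀ x : F, x ^ 2 ^ (2 * m + 1) = x := by
    intro x
    have := FiniteField.pow_card x
    rwa [hF] at this
  have hT : ∀ x : F, (x ^ T) ^ T = x ^ 2 := by
    intro x
    rw [← pow_mul, hT_def, ← pow_add,
      show (m + 1) + (m + 1) = (2 * m + 1) + 1 by omega, pow_succ, pow_mul, hq]
  have hfr : ∀ x y : F, (x + y) ^ T = x ^ T + y ^ T := fun x y =>
    add_pow_char_pow (R := F) (p := 2) (n := m + 1) (x := x) (y := y)
  -- a suitable element e of Fˣ
  have hcardU : Nat.card Fˣ = 2 ^ (2 * m + 1) - 1 := by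
    rw [Nat.card_units, Nat.card_eq_fintype_card, hF]
  have hlt : T + 1 < Nat.card Fˣ := by
    rw [hcardU, hT_def]
    have h1 : 2 ^ (m + 1) + 2 < 2 ^ (m + 2) := by
      rw [pow_succ 2 (m + 1)]
      have : (4 : ℕ) ≤ 2 ^ (m + 1) := by
        calc (4 : ℕ) = 2 ^ 2 := rfl
        _ ≤ 2 ^ (m + 1) := Nat.pow_le_pow_right (by norm_num) (by omega)
      linarith
    have h2 : (2 : ℕ) ^ (m + 2) ≤ 2 ^ (2 * m + 1) :=
      Nat.pow_le_pow_right (by norm_num) (by omega)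
    have h3 : 2 ^ (m + 1) + 2 < 2 ^ (2 * m + 1) := lt_of_lt_of_le h1 h2
    exact Nat.lt_sub_iff_add_lt.mpr (by linarith)
  obtain ⟨e, he⟩ := exists_pow_ne_one_of_isCyclic (G := Fˣ) (k := T + 1)
    (by omega) hlt
  have he1 : e ≠ 1 := fun h => he (by rw [h, one_pow])
  -- membership of generators
  have hxi_mem : ∀ x y : F, xiGL T x y ∈ suzukiStab F m := fun x y =>
    Subgroup.subset_closure (Or.inl ⟨(x, y), rfl⟩)
  have heta_mem : etaGL m e ∈ suzukiStab F m :=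
    Subgroup.subset_closure (Or.inr ⟨e, rfl⟩)
  -- the commutator formula
  open scoped commutatorElement in
  have hcomm : ∀ x y : F,
      ⁅etaGL m e, xiGL T x y⁆
        = xiGL T ((↑e⁻¹ : F) * x) ((↑(e⁻¹ ^ (T + 1)) : F) * y)
            * (xiGL T x y)⁻¹ := by
    intro x y
    have h := etaGL_mul_xiGL (m := m) hT e x y
    rw [← hT_def] at h
    rw [commutatorElement_def, h]
    group
  have hcomm_mem : ∀ x y : F,
      xiGL T ((↑e⁻¹ : F) * x) ((↑(e⁻¹ ^ (T + 1)) : F) * y) * (xiGL T x y)⁻¹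
        ∈ ⁅suzukiStab F m, suzukiStab F m⁆ := by
    intro x y
    rw [← hcomm]
    exact Subgroup.commutator_mem_commutator heta_mem (hxi_mem x y)
  -- step 1 : all ξ(0, y) are in the derived subgroup
  have hstep1 : ∀ x : F, xiGL T 0 x ∈ ⁅suzukiStab F m, suzukiStab F m⁆ := by
    intro x
    set c : F := (↑(e⁻¹ ^ (T + 1)) : F) with hc_def
    have hc1 : c ≠ 1 := by
      intro h
      apply he
      have : (e⁻¹ ^ (T + 1) : Fˣ) = 1 := Units.ext (by rwa [Units.val_one])
      rw [inv_pow] at this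
      rw [← inv_inv (e ^ (T + 1)), this, inv_one]
    have hc : c + 1 ≠ 0 := by
      intro h
      apply hc1
      have h2 : (1 : F) + 1 = 0 := CharTwo.add_self_eq_zero 1
      linear_combination h - h2
    set y : F := (c + 1)⁻¹ * x with hy_def
    have key := hcomm_mem 0 y
    rw [xiGL_inv hTne hfr hT, xiGL_mul hfr hT] at key
    have hz : T + 1 ≠ 0 := by omega
    simp only [mul_zero, zero_pow hz, zero_pow hTne, add_zero, zero_add, zero_mul] at key
    convert key using 2
    rw [hy_def]
    field_simp
  -- step 2 : for every x there is some y with ξ(x, y) in the derived subgroup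
  have hstep2 : ∀ x : F, ∃ y : F, xiGL T x y ∈ ⁅suzukiStab F m, suzukiStab F m⁆ := by
    intro x
    have hl1 : ((↑e⁻¹ : F) + 1) ≠ 0 := by
      intro h
      apply he1
      have h2 : (1 : F) + 1 = 0 := CharTwo.add_self_eq_zero 1
      have : (↑e⁻¹ : F) = 1 := by linear_combination h - h2
      have : (e⁻¹ : Fˣ) = 1 := Units.ext (by rwa [Units.val_one])
      rw [← inv_inv e, this, inv_one]
    have hinv : (↑e⁻¹ : F) = (↑(e : Fˣ) : F)⁻¹ := Units.val_inv_eq_inv_val e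
    have hl2 : (1 : F) + (↑e : F) ≠ 0 := by
      intro h0
      apply hl1
      rw [hinv, show ((↑e : F))⁻¹ + 1 = (↑e : F)⁻¹ * (1 + (↑e : F)) by
        field_simp, h0, mul_zero]
    set z : F := ((↑e⁻¹ : F) + 1)⁻¹ * x with hz_def
    have key := hcomm_mem z 0
    rw [xiGL_inv hTne hfr hT, xiGL_mul hfr hT] at key
    refine ⟨z ^ (T + 1) + ((↑e⁻¹ : F) * z) ^ T * z, ?_⟩
    simp only [mul_zero, zero_add] at key
    convert key using 2
    rw [hz_def, hinv]
    field_simp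
  -- combine the two steps
  have hmem : xiGL T a b ∈ ⁅suzukiStab F m, suzukiStab F m⁆ := by
    obtain ⟨C, hC⟩ := hstep2 a
    have h0 := hstep1 (C + b)
    have := mul_mem hC h0
    rwa [xiGL_mul hfr hT, add_zero, show C + (C + b) + a ^ T * 0 = b by
      rw [mul_zero, add_zero]
      linear_combination CharTwo.add_self_eq_zero C] at this
  refine ⟨hmem, ?_⟩
  -- characters vanish on the derived subgroup
  intro φ h
  have hrepr : ⁅suzukiStab F m, suzukiStab F m⁆
      = Subgroup.map (suzukiStab F m).subtype (commutator ↥(suzukiStab F m)) := by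
    rw [commutator_def, Subgroup.map_commutator, ← MonoidHom.range_eq_map,
      Subgroup.range_subtype]
  rw [hrepr] at hmem
  obtain ⟨y, hy, hyval⟩ := hmem
  have h1 : φ y = 1 := Abelianization.commutator_subset_ker φ hy
  have h2 : (⟨xiGL T a b, h⟩ : ↥(suzukiStab F m)) = y := by
    apply Subtype.ext
    exact hyval.symm
  rw [h2, h1]
end
end

section
/- Let μ ≠ 0 and let φ : Fin n → ℝ^d be unit vectors with ‖⟪φ i, φ j⟫‖ = μ for all i ≠ j, and suppose the family (φ i) is linearly dependent over ℝ. Let ι : ℝ^d → ℂ^d be the coordinatewise inclusion. Then a permutation σ of Fin n satisfies: there exists a unitary operator U on ℂ^d with Submodule.map U (ℂ ∙ ι(φ i)) = ℂ ∙ ι(φ (σ i)) for every i, if and only if σ preserves negative triples: for all distinct i, j, k, the triple product ⟪φ i, φ j⟫·⟪φ j, φ k⟫·⟪φ k, φ i⟫ equals −μ³ exactly when ⟪φ (σ i), φ (σ j)⟫·⟪φ (σ j), φ (σ k)⟫·⟪φ (σ k), φ (σ i)⟫ equals −μ³. -/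
noncomputable section

open scoped InnerProductSpace

/-- Coordinatewise inclusion of `ℝ^d` into `ℂ^d`. -/
def iotaC {d : ℕ} (v : EuclideanSpace ℝ (Fin d)) : EuclideanSpace ℂ (Fin d) :=
  WithLp.toLp 2 (fun k => (v k : ℂ))

lemma iotaC_inner {d : ℕ} (x y : EuclideanSpace ℝ (Fin d)) :
    (inner ℂ (iotaC x) (iotaC y) : ℂ) = ((inner ℝ x y : ℝ) : ℂ) := by
  simp only [PiLp.inner_apply, RCLike.inner_apply, iotaC]
  push_cast
  simp [Complex.conj_ofReal]

lemma iotaC_smul {d : ℕ} (r : ℝ) (x : EuclideanSpace ℝ (Fin d)) :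
    iotaC (r • x) = (r : ℂ) • iotaC x := by
  ext k
  simp [iotaC, Complex.ofReal_mul]

lemma exists_isometry_of_gram {n d : ℕ} (φ ψ : Fin n → EuclideanSpace ℝ (Fin d))
    (h : ∀ i j, (inner ℝ (ψ i) (ψ j) : ℝ) = inner ℝ (φ i) (φ j)) :
    ∃ U : EuclideanSpace ℝ (Fin d) →ₗᵢ[ℝ] EuclideanSpace ℝ (Fin d),
      ∀ i, U (φ i) = ψ i := by
  classical
  set A : (Fin n → ℝ) →ₗ[ℝ] EuclideanSpace ℝ (Fin d) := Fintype.linearCombination ℝ φ with hA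
  set B : (Fin n → ℝ) →ₗ[ℝ] EuclideanSpace ℝ (Fin d) := Fintype.linearCombination ℝ ψ with hB
  have hAB : ∀ c c' : Fin n → ℝ, (inner ℝ (B c) (B c') : ℝ) = inner ℝ (A c) (A c') := by
    intro c c'
    simp only [hA, hB, Fintype.linearCombination_apply, sum_inner, inner_sum,
      real_inner_smul_left, real_inner_smul_right]
    exact Finset.sum_congr rfl fun i _ => Finset.sum_congr rfl fun j _ => by rw [h j i]
  have hker : LinearMap.ker A ≤ LinearMap.ker B := by
    intro c hc
    simp only [LinearMap.mem_ker] at hc ⊢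
    have : (inner ℝ (B c) (B c) : ℝ) = 0 := by rw [hAB, hc, inner_zero_left]
    exact inner_self_eq_zero.mp this
  set S := LinearMap.range A with hS
  set L0 : S →ₗ[ℝ] EuclideanSpace ℝ (Fin d) :=
    (Submodule.liftQ (LinearMap.ker A) B hker).comp
      (LinearMap.quotKerEquivRange A).symm.toLinearMap with hL0
  have hL0app : ∀ c : Fin n → ℝ, ∀ hc : A c ∈ S, L0 ⟨A c, hc⟩ = B c := by
    intro c hc
    have : (LinearMap.quotKerEquivRange A).symm ⟨A c, hc⟩ = Submodule.Quotient.mk c := by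
      apply (LinearMap.quotKerEquivRange A).injective
      simp only [LinearEquiv.apply_symm_apply, LinearMap.quotKerEquivRange_apply_mk]
      rfl
    simp [hL0, this, Submodule.liftQ_apply]
  have hL0inner : ∀ x y : S, (inner ℝ (L0 x) (L0 y) : ℝ) = inner ℝ (x : EuclideanSpace ℝ (Fin d)) (y : EuclideanSpace ℝ (Fin d)) := by
    rintro ⟨x, hx⟩ ⟨y, hy⟩
    obtain ⟨c, rfl⟩ := hx
    obtain ⟨c', rfl⟩ := hy
    show inner ℝ (L0 ⟨A c, LinearMap.mem_range_self A c⟩) (L0 ⟨A c', LinearMap.mem_range_self A c'⟩) = inner ℝ (A c) (A c')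
    rw [hL0app c, hL0app c', hAB]
  set L : S →ₗᵢ[ℝ] EuclideanSpace ℝ (Fin d) :=
    L0.isometryOfInner (fun x y => by rw [hL0inner]; rfl) with hL
  refine ⟨L.extend, fun i => ?_⟩
  have hφ : A (Pi.single i 1) = φ i := by
    simp [hA, Fintype.linearCombination_apply, Pi.single_apply]
  have hmem : φ i ∈ S := ⟨Pi.single i 1, hφ⟩
  have := LinearIsometry.extend_apply L ⟨φ i, hmem⟩
  rw [this]
  show L0 _ = _
  have := hL0app (Pi.single i 1) (hφ ▸ hmem)
  rw [show (⟨φ i, hmem⟩ : S) = ⟨A (Pi.single i 1), hφ ▸ hmem⟩ from by simp [hφ]] at *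
  rw [this]
  simp [hB, Fintype.linearCombination_apply, Pi.single_apply]

lemma exists_complex_isometry {d : ℕ}
    (U : EuclideanSpace ℝ (Fin d) →ₗᵢ[ℝ] EuclideanSpace ℝ (Fin d)) :
    ∃ V : EuclideanSpace ℂ (Fin d) ≃ₗᵢ[ℂ] EuclideanSpace ℂ (Fin d),
      ∀ x, V (iotaC x) = iotaC (U x) := by
  classical
  set M : Fin d → Fin d → ℝ := fun k m => U (EuclideanSpace.single m 1) k with hM
  -- decomposition of a real vector
  have hdec : ∀ x : EuclideanSpace ℝ (Fin d), x = ∑ m, x m • EuclideanSpace.single m (1:ℝ) := by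
    intro x
    ext k
    rw [WithLp.ofLp_sum, Finset.sum_apply]
    simp [EuclideanSpace.single_apply, Finset.sum_ite_eq' Finset.univ k]
  have hUx : ∀ (x : EuclideanSpace ℝ (Fin d)) (k : Fin d), U x k = ∑ m, M k m * x m := by
    intro x k
    conv_lhs => rw [hdec x]
    rw [map_sum]
    rw [WithLp.ofLp_sum, Finset.sum_apply]
    exact Finset.sum_congr rfl fun m _ => by simp [hM, mul_comm]
  -- orthogonality relations
  have key : ∀ m m' : Fin d, (∑ k, M k m * M k m') = if m = m' then (1:ℝ) else 0 := by
    intro m m'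
    have h1 : (inner ℝ (U (EuclideanSpace.single m (1:ℝ))) (U (EuclideanSpace.single m' 1)) : ℝ)
        = inner ℝ (EuclideanSpace.single m (1:ℝ)) (EuclideanSpace.single m' (1:ℝ)) :=
      U.inner_map_map _ _
    rw [PiLp.inner_apply, PiLp.inner_apply] at h1
    simp only [RCLike.inner_apply', starRingEnd_apply, star_trivial] at h1
    rw [show (∑ k, M k m * M k m') = ∑ k, U (EuclideanSpace.single m (1:ℝ)) k * U (EuclideanSpace.single m' 1) k from rfl, h1]
    simp [EuclideanSpace.single_apply, Finset.sum_ite_eq' Finset.univ m']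
    rw [eq_comm]
    simp [eq_comm]
  -- the complex linear map
  set g : EuclideanSpace ℂ (Fin d) →ₗ[ℂ] EuclideanSpace ℂ (Fin d) :=
    { toFun := fun z => (WithLp.toLp 2 (fun k => ∑ m, (M k m : ℂ) * z m) : EuclideanSpace ℂ (Fin d))
      map_add' := by
        intro z w
        ext k
        show (∑ m, (M k m : ℂ) * (z m + w m)) = (∑ m, (M k m : ℂ) * z m) + ∑ m, (M k m : ℂ) * w m
        simp [mul_add, Finset.sum_add_distrib]
      map_smul' := by
        intro c z
        ext k
        show (∑ m, (M k m : ℂ) * (c * z m)) = c * ∑ m, (M k m : ℂ) * z m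
        rw [Finset.mul_sum]
        exact Finset.sum_congr rfl fun m _ => by ring } with hg
  -- inner product preservation
  have hginner : ∀ z w : EuclideanSpace ℂ (Fin d), (inner ℂ (g z) (g w) : ℂ) = inner ℂ z w := by
    intro z w
    rw [PiLp.inner_apply, PiLp.inner_apply]
    simp only [RCLike.inner_apply']
    have hgz : ∀ (u : EuclideanSpace ℂ (Fin d)) (k : Fin d), g u k = ∑ m, (M k m : ℂ) * u m :=
      fun u k => rfl
    calc ∑ k, (starRingEnd ℂ) (g z k) * g w k
        = ∑ k, ∑ m, ∑ m', ((M k m : ℂ) * (M k m' : ℂ)) * ((starRingEnd ℂ) (z m) * w m') := by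
          refine Finset.sum_congr rfl fun k _ => ?_
          rw [hgz, hgz, map_sum, Finset.sum_mul_sum]
          refine Finset.sum_congr rfl fun m _ => Finset.sum_congr rfl fun m' _ => ?_
          rw [map_mul, Complex.conj_ofReal]
          ring
      _ = ∑ m, ∑ m', ((∑ k, M k m * M k m' : ℝ) : ℂ) * ((starRingEnd ℂ) (z m) * w m') := by
          rw [Finset.sum_comm]
          refine Finset.sum_congr rfl fun m _ => ?_
          rw [Finset.sum_comm]
          refine Finset.sum_congr rfl fun m' _ => ?_
          rw [← Finset.sum_mul]
          push_cast
          ring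
      _ = ∑ m, (starRingEnd ℂ) (z m) * w m := by
          refine Finset.sum_congr rfl fun m _ => ?_
          rw [Finset.sum_congr rfl fun m' (_ : m' ∈ Finset.univ) => by rw [key m m']]
          simp [Finset.sum_ite_eq' Finset.univ m, apply_ite (fun r : ℝ => (r : ℂ))]
  -- g is bijective
  have hinj : Function.Injective g := by
    intro z w hzw
    have : (inner ℂ (g (z - w)) (g (z - w)) : ℂ) = 0 := by
      rw [map_sub, hzw, sub_self, inner_zero_left]
    rw [hginner] at this
    have := inner_self_eq_zero.mp this
    exact sub_eq_zero.mp this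
  have hsurj : Function.Surjective g := (LinearMap.injective_iff_surjective).mp hinj
  set ge : EuclideanSpace ℂ (Fin d) ≃ₗ[ℂ] EuclideanSpace ℂ (Fin d) :=
    LinearEquiv.ofBijective g ⟨hinj, hsurj⟩ with hge
  refine ⟨ge.isometryOfInner (fun x y => hginner x y), fun x => ?_⟩
  show g (iotaC x) = iotaC (U x)
  ext k
  show (∑ m, (M k m : ℂ) * (iotaC x) m) = ((U x k : ℝ) : ℂ)
  rw [hUx x k]
  push_cast
  rfl

theorem stmt19 {n d : ℕ} (μ : ℝ) (hμ : μ ≠ 0)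
    (φ : Fin n → EuclideanSpace ℝ (Fin d))
    (hnorm : ∀ i, ‖φ i‖ = 1)
    (hang : ∀ i j, i ≠ j → ‖(inner ℝ (φ i) (φ j) : ℝ)‖ = μ)
    (hdep : ¬ LinearIndependent ℝ φ)
    (σ : Equiv.Perm (Fin n)) :
    (∃ U : EuclideanSpace ℂ (Fin d) ≃ₗᵢ[ℂ] EuclideanSpace ℂ (Fin d),
        ∀ i, Submodule.map
          (U.toLinearEquiv : EuclideanSpace ℂ (Fin d) →ₗ[ℂ] EuclideanSpace ℂ (Fin d))
          (ℂ ∙ iotaC (φ i)) = ℂ ∙ iotaC (φ (σ i))) ↔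
    (∀ i j k : Fin n, i ≠ j → j ≠ k → i ≠ k →
      ((inner ℝ (φ i) (φ j) : ℝ) * inner ℝ (φ j) (φ k) * inner ℝ (φ k) (φ i) = -μ ^ 3 ↔
        (inner ℝ (φ (σ i)) (φ (σ j)) : ℝ) * inner ℝ (φ (σ j)) (φ (σ k))
          * inner ℝ (φ (σ k)) (φ (σ i)) = -μ ^ 3)) := by
  classical
  constructor
  · rintro ⟨U, hU⟩
    have hTT : ∀ i j k : Fin n,
        (inner ℝ (φ i) (φ j) : ℝ) * inner ℝ (φ j) (φ k) * inner ℝ (φ k) (φ i) =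
        (inner ℝ (φ (σ i)) (φ (σ j)) : ℝ) * inner ℝ (φ (σ j)) (φ (σ k))
          * inner ℝ (φ (σ k)) (φ (σ i)) := by
      have hc : ∀ i : Fin n, ∃ c : ℂ, U (iotaC (φ i)) = c • iotaC (φ (σ i)) := by
        intro i
        have hmem : U (iotaC (φ i)) ∈ (ℂ ∙ iotaC (φ (σ i))) := by
          rw [← hU i]
          exact Submodule.mem_map_of_mem (Submodule.mem_span_singleton_self _)
        obtain ⟨c, hc⟩ := Submodule.mem_span_singleton.mp hmem
        exact ⟨c, hc.symm⟩
      choose c hcs using hc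
      have hone : ∀ i : Fin n, (inner ℂ (iotaC (φ i)) (iotaC (φ i)) : ℂ) = 1 := by
        intro i
        rw [iotaC_inner, real_inner_self_eq_norm_sq, hnorm]
        norm_num
      have hunit : ∀ i : Fin n, (starRingEnd ℂ) (c i) * c i = 1 := by
        intro i
        have h1 : (inner ℂ (U (iotaC (φ i))) (U (iotaC (φ i))) : ℂ) = 1 := by
          rw [U.inner_map_map, hone]
        rw [hcs i, inner_smul_left, inner_smul_right, hone (σ i)] at h1
        rw [← h1]; ring
      have hrel : ∀ i j : Fin n, ((inner ℝ (φ i) (φ j) : ℝ) : ℂ)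
          = (starRingEnd ℂ) (c i) * c j * ((inner ℝ (φ (σ i)) (φ (σ j)) : ℝ) : ℂ) := by
        intro i j
        have h1 : (inner ℂ (U (iotaC (φ i))) (U (iotaC (φ j))) : ℂ) = ((inner ℝ (φ i) (φ j) : ℝ) : ℂ) := by
          rw [U.inner_map_map, iotaC_inner]
        rw [hcs i, hcs j, inner_smul_left, inner_smul_right, iotaC_inner] at h1
        rw [← h1]; ring
      intro i j k
      have key : (((inner ℝ (φ i) (φ j) : ℝ) * inner ℝ (φ j) (φ k) * inner ℝ (φ k) (φ i) : ℝ) : ℂ)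
          = (((inner ℝ (φ (σ i)) (φ (σ j)) : ℝ) * inner ℝ (φ (σ j)) (φ (σ k)) * inner ℝ (φ (σ k)) (φ (σ i)) : ℝ) : ℂ) := by
        push_cast
        rw [hrel i j, hrel j k, hrel k i]
        have ui := hunit i
        have uj := hunit j
        have uk := hunit k
        set A := ((inner ℝ (φ (σ i)) (φ (σ j)) : ℝ) : ℂ)
        set B := ((inner ℝ (φ (σ j)) (φ (σ k)) : ℝ) : ℂ)
        set C := ((inner ℝ (φ (σ k)) (φ (σ i)) : ℝ) : ℂ)
        linear_combination (A * B * C * ((starRingEnd ℂ) (c j) * c j) * ((starRingEnd ℂ) (c k) * c k)) * ui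
          + (A * B * C * ((starRingEnd ℂ) (c k) * c k)) * uj + (A * B * C) * uk
      exact_mod_cast key
    intro i j k _ _ _
    rw [hTT i j k]
  · intro htri
    -- trivial case n ≤ 1
    by_cases hn1 : n ≤ 1
    · refine ⟨LinearIsometryEquiv.refl ℂ _, fun i => ?_⟩
      haveI : Subsingleton (Fin n) := by
        rcases Nat.lt_or_ge n 1 with h | h
        · interval_cases n
          · exact Fin.subsingleton_zero
        · have : n = 1 := le_antisymm hn1 h
          subst this; exact Fin.subsingleton_one
      have hσ : σ i = i := Subsingleton.elim _ _
      rw [hσ]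
      rw [show ((LinearIsometryEquiv.refl ℂ (EuclideanSpace ℂ (Fin d))).toLinearEquiv :
          EuclideanSpace ℂ (Fin d) →ₗ[ℂ] EuclideanSpace ℂ (Fin d)) = LinearMap.id from rfl,
        Submodule.map_id]
    push_neg at hn1
    have hμpos : 0 ≤ μ := by
      have h01 : (⟨0, by omega⟩ : Fin n) ≠ ⟨1, by omega⟩ := by
        intro h; exact absurd (congrArg Fin.val h) (by simp)
      rw [← hang _ _ h01]; exact norm_nonneg _
    -- notation
    set a : Fin n → Fin n → ℝ := fun i j => inner ℝ (φ i) (φ j) with ha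
    have hsym : ∀ i j, a i j = a j i := fun i j => real_inner_comm _ _
    have habs : ∀ i j, i ≠ j → a i j = μ ∨ a i j = -μ := by
      intro i j h
      have := hang i j h
      rw [Real.norm_eq_abs, abs_eq hμpos] at this
      exact this
    have hsq : ∀ i j, i ≠ j → a i j ^ 2 = μ ^ 2 := by
      intro i j h
      rcases habs i j h with h' | h' <;> rw [h'] <;> ring
    have hself : ∀ i, a i i = 1 := by
      intro i
      rw [ha]
      simp only
      rw [real_inner_self_eq_norm_sq, hnorm]
      norm_num
    -- triple products transfer
    have hT : ∀ i j k : Fin n, i ≠ j → j ≠ k → i ≠ k →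
        a i j * a j k * a k i = a (σ i) (σ j) * a (σ j) (σ k) * a (σ k) (σ i) := by
      intro i j k hij hjk hik
      have hval : ∀ p q r : Fin n, p ≠ q → q ≠ r → p ≠ r →
          a p q * a q r * a r p = μ ^ 3 ∨ a p q * a q r * a r p = -μ ^ 3 := by
        intro p q r h1 h2 h3
        rcases habs p q h1 with e1 | e1 <;> rcases habs q r h2 with e2 | e2 <;>
          rcases habs r p (Ne.symm h3) with e3 | e3 <;> rw [e1, e2, e3] <;>
          first
            | (left; ring1)
            | (right; ring1)
      have hμ3 : (μ:ℝ) ^ 3 ≠ -μ ^ 3 := by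
        intro h
        have h3 : μ ^ 3 = 0 := by linarith
        exact hμ (pow_eq_zero_iff (by norm_num : (3:ℕ) ≠ 0) |>.mp h3)
      have hσij : σ i ≠ σ j := fun h => hij (σ.injective h)
      have hσjk : σ j ≠ σ k := fun h => hjk (σ.injective h)
      have hσik : σ i ≠ σ k := fun h => hik (σ.injective h)
      by_cases hneg : a i j * a j k * a k i = -μ ^ 3
      · rw [hneg, ((htri i j k hij hjk hik).mp hneg).symm]
      · have h1 : a i j * a j k * a k i = μ ^ 3 :=
          (hval i j k hij hjk hik).resolve_right hneg
        have h2 : a (σ i) (σ j) * a (σ j) (σ k) * a (σ k) (σ i) ≠ -μ ^ 3 :=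
          fun h => hneg ((htri i j k hij hjk hik).mpr h)
        have h3 : a (σ i) (σ j) * a (σ j) (σ k) * a (σ k) (σ i) = μ ^ 3 :=
          (hval (σ i) (σ j) (σ k) hσij hσjk hσik).resolve_right h2
        rw [h1, h3]
    -- the sign function
    set i0 : Fin n := ⟨0, by omega⟩ with hi0
    set s : Fin n → ℝ := fun i => if i = i0 then 1 else a i0 i * a (σ i0) (σ i) / μ ^ 2 with hs
    have hs2 : ∀ i, s i * s i = 1 := by
      intro i
      by_cases h : i = i0
      · simp [hs, h]
      · have h1 : a i0 i ^ 2 = μ ^ 2 := hsq i0 i (Ne.symm h)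
        have h2 : a (σ i0) (σ i) ^ 2 = μ ^ 2 := hsq _ _ (fun hh => (Ne.symm h) (σ.injective hh))
        simp only [hs, if_neg h]
        have hμ2 : (μ:ℝ) ^ 2 ≠ 0 := pow_ne_zero _ hμ
        field_simp
        linear_combination (a (σ i0) (σ i) ^ 2) * h1 + μ ^ 2 * h2
    have hpair : ∀ i j, i ≠ j → a i j = s i * s j * a (σ i) (σ j) := by
      intro i j hij
      by_cases hi : i = i0
      · subst hi
        have hj : j ≠ i0 := Ne.symm hij
        have h2 : a (σ i0) (σ j) ^ 2 = μ ^ 2 := hsq _ _ (fun hh => hij (σ.injective hh))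
        simp only [hs, if_pos rfl, if_neg hj]
        have hμ2 : (μ:ℝ) ^ 2 ≠ 0 := pow_ne_zero _ hμ
        field_simp
        linear_combination (-(a i0 j)) * h2
      · by_cases hj : j = i0
        · subst hj
          have h2 : a (σ i0) (σ i) ^ 2 = μ ^ 2 := hsq _ _ (fun hh => hi (σ.injective hh).symm)
          simp only [hs, if_pos rfl, if_neg hi]
          have hμ2 : (μ:ℝ) ^ 2 ≠ 0 := pow_ne_zero _ hμ
          rw [hsym i i0, hsym (σ i) (σ i0)]
          field_simp
          linear_combination (-(a i0 i)) * h2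
        · -- generic case, uses the triple identity
          have hE := hT i0 i j (Ne.symm hi) hij (Ne.symm hj)
          have h1 : a i0 i ^ 2 = μ ^ 2 := hsq _ _ (Ne.symm hi)
          have h2 : a i0 j ^ 2 = μ ^ 2 := hsq _ _ (Ne.symm hj)
          simp only [hs, if_neg hi, if_neg hj]
          have hμ2 : (μ:ℝ) ^ 2 ≠ 0 := pow_ne_zero _ hμ
          rw [hsym j i0, hsym (σ j) (σ i0)] at hE
          field_simp
          linear_combination (a i0 i * a i0 j) * hE - (a i j * μ ^ 2) * h1
            - (a i j * a i0 i ^ 2) * h2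
    -- the switched family
    set ψ : Fin n → EuclideanSpace ℝ (Fin d) := fun i => s i • φ (σ i) with hψ
    have hgram : ∀ i j, (inner ℝ (ψ i) (ψ j) : ℝ) = inner ℝ (φ i) (φ j) := by
      intro i j
      by_cases hij : i = j
      · subst hij
        show (inner ℝ (s i • φ (σ i)) (s i • φ (σ i)) : ℝ) = _
        rw [real_inner_smul_left, real_inner_smul_right]
        have : (inner ℝ (φ (σ i)) (φ (σ i)) : ℝ) = 1 := hself (σ i)
        rw [this]
        have : (inner ℝ (φ i) (φ i) : ℝ) = 1 := hself i
        rw [this, mul_one, hs2 i]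
      · show (inner ℝ (s i • φ (σ i)) (s j • φ (σ j)) : ℝ) = _
        rw [real_inner_smul_left, real_inner_smul_right]
        have := hpair i j hij
        show s i * (s j * a (σ i) (σ j)) = a i j
        rw [this]; ring
    obtain ⟨U, hUφ⟩ := exists_isometry_of_gram φ ψ hgram
    obtain ⟨V, hV⟩ := exists_complex_isometry U
    refine ⟨V, fun i => ?_⟩
    have hmap : Submodule.map
        (V.toLinearEquiv : EuclideanSpace ℂ (Fin d) →ₗ[ℂ] EuclideanSpace ℂ (Fin d))
        (ℂ ∙ iotaC (φ i)) = ℂ ∙ V (iotaC (φ i)) := by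
      rw [Submodule.map_span, Set.image_singleton]
      rfl
    rw [hmap, hV, hUφ]
    show (ℂ ∙ iotaC (s i • φ (σ i))) = _
    rw [iotaC_smul]
    exact Submodule.span_singleton_smul_eq
      (by
        have : s i ≠ 0 := fun h => by simpa [h] using hs2 i
        exact (isUnit_iff_ne_zero.mpr (by exact_mod_cast Complex.ofReal_ne_zero.mpr this))) _
end
end
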